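/- arXiv:1912.12717 — 5 statements merged into one kernel-verified Lean document; each statement's English description precedes it below -/
import Mathlib

section
/- For every finite nonempty set E and every injective weight function w : E → ℝ with w_e > 0 for all e ∈ E, there exists a real number p > 0 that is a dominant power, i.e. such that for every e ∈ E one has w_e^p > ∑_{s ∈ E, w_s < w_e} w_s^p. -/
/-! Dividing by `w e ^ p`, the condition at `e` says that `∑ (w s / w e) ^ p < 1` over the
lighter edges `s`. Each ratio lies in `[0, 1)`, so every term tends to `0` as `p → ∞`; hence
the condition holds for all large `p`, and for all `e` at once since `E` is finite. -/

open Filter Finset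

theorem eventually_sum_rpow_lt_one {ι : Type*} (S : Finset ι) (r : ι → ℝ)
    (hr : ∀ i ∈ S, 0 ≤ r i ∧ r i < 1) :
    ∀ᶠ p : ℝ in atTop, ∑ i ∈ S, r i ^ p < 1 := by
  have hlim : Tendsto (fun p : ℝ => ∑ i ∈ S, r i ^ p) atTop (nhds 0) := by
    simpa using tendsto_finsetSum S fun i hi =>
      tendsto_rpow_atTop_of_base_lt_one (r i) (by linarith [(hr i hi).1]) (hr i hi).2
  exact hlim.eventually_lt_const one_pos

theorem eventually_sum_rpow_lt_rpow {ι : Type*} (S : Finset ι) (x : ι → ℝ) {y : ℝ} (hy : 0 < y)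
    (hx : ∀ i ∈ S, 0 ≤ x i ∧ x i < y) :
    ∀ᶠ p : ℝ in atTop, ∑ i ∈ S, x i ^ p < y ^ p := by
  have hratio : ∀ i ∈ S, 0 ≤ x i / y ∧ x i / y < 1 := fun i hi =>
    ⟨div_nonneg (hx i hi).1 hy.le, (div_lt_one hy).2 (hx i hi).2⟩
  filter_upwards [eventually_sum_rpow_lt_one S _ hratio] with p hp
  have hyp : 0 < y ^ p := Real.rpow_pos_of_pos hy p
  have hsum : ∑ i ∈ S, (x i / y) ^ p = (∑ i ∈ S, x i ^ p) / y ^ p := by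
    rw [sum_div]
    exact sum_congr rfl fun i hi => Real.div_rpow (hx i hi).1 hy.le p
  rwa [hsum, div_lt_one hyp] at hp

theorem dominant_power_exists_general {E : Type*} [Fintype E]
    (w : E → ℝ) (hpos : ∀ e, 0 < w e) :
    ∃ p : ℝ, 0 < p ∧ ∀ e : E,
      (∑ s ∈ Finset.univ.filter (fun s => w s < w e), w s ^ p) < w e ^ p := by
  have hlarge : ∀ᶠ p : ℝ in atTop, ∀ e : E,
      (∑ s ∈ univ.filter (fun s => w s < w e), w s ^ p) < w e ^ p :=
    eventually_all.2 fun e => eventually_sum_rpow_lt_rpow _ w (hpos e) fun s hs =>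
      ⟨(hpos s).le, (mem_filter.1 hs).2⟩
  exact ((eventually_gt_atTop 0).and hlarge).exists

/-- For every finite nonempty set `E` and every injective, positive weight function
`w : E → ℝ`, there exists a real number `p > 0` that is a *dominant power*, i.e.
for every `e ∈ E` one has `w e ^ p > ∑_{s : w s < w e} w s ^ p`. -/
theorem dominant_power_exists {E : Type*} [Fintype E] [Nonempty E]
    (w : E → ℝ) (hinj : Function.Injective w) (hpos : ∀ e, 0 < w e) :
    ∃ p : ℝ, 0 < p ∧ ∀ e : E,
      (∑ s ∈ Finset.univ.filter (fun s => w s < w e), w s ^ p) < w e ^ p :=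
  dominant_power_exists_general w hpos
end

section
/- Let E be a finite set with positive, pairwise distinct weights w : E → ℝ and let p > 0 be a dominant power. Then for any two subsets A, B ⊆ E with A ≠ B, if the maximum-weight element e of the symmetric difference A Δ B belongs to A, then ∑_{s ∈ A} w_s^p > ∑_{s ∈ B} w_s^p. In particular, the map A ↦ ∑_{s ∈ A} w_s^p is injective on subsets of E. -/
/-!
After cancelling `A ∩ B`, the comparison is between `A \ B` and `B \ A`. The heaviest element `e`
of the symmetric difference lies in `A \ B`, and every element of `B \ A` is lighter than `e`, so
by dominance `e` alone outweighs all of `B \ A`.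
-/

/-- `p` is a dominant power for the weights `w` if for every edge `e`,
`w e ^ p` strictly exceeds the sum of `w s ^ p` over all `s` with `w s < w e`. -/
def DominantPower {E : Type*} [Fintype E] (w : E → ℝ) (p : ℝ) : Prop :=
  ∀ e : E, (∑ s ∈ Finset.univ.filter (fun s => w s < w e), w s ^ p) < w e ^ p

open Finset Real
open scoped symmDiff

namespace DominantPower

variable {E : Type*} [Fintype E] {w : E → ℝ} {p : ℝ}

theorem sum_rpow_lt (hdom : DominantPower w p) (hpos : ∀ e, 0 < w e) {S : Finset E} {e : E}
    (hS : ∀ s ∈ S, w s < w e) : ∑ s ∈ S, w s ^ p < w e ^ p :=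
  (sum_le_sum_of_subset_of_nonneg (fun s hs => mem_filter.2 ⟨mem_univ s, hS s hs⟩)
    fun s _ _ => rpow_nonneg (hpos s).le p).trans_lt (hdom e)

variable [DecidableEq E]

theorem sum_rpow_lt_sum_rpow (hdom : DominantPower w p) (hpos : ∀ e, 0 < w e)
    {A B : Finset E} {e : E} (he : e ∈ A ∆ B) (hmax : ∀ s ∈ A ∆ B, s ≠ e → w s < w e)
    (heA : e ∈ A) : ∑ s ∈ B, w s ^ p < ∑ s ∈ A, w s ^ p := by
  have heB : e ∉ B := fun heB => (mem_symmDiff.1 he).elim (·.2 heB) (·.2 heA)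
  rw [← sum_sdiff_lt_sum_sdiff]
  have hlighter : ∀ s ∈ B \ A, w s < w e := fun s hs =>
    hmax s (mem_symmDiff.2 (Or.inr (mem_sdiff.1 hs))) fun hse => (mem_sdiff.1 hs).2 (hse ▸ heA)
  calc ∑ s ∈ B \ A, w s ^ p < w e ^ p := hdom.sum_rpow_lt hpos hlighter
    _ ≤ ∑ s ∈ A \ B, w s ^ p :=
      single_le_sum (fun s _ => rpow_nonneg (hpos s).le p) (mem_sdiff.2 ⟨heA, heB⟩)

theorem injective_sum_rpow (hdom : DominantPower w p) (hpos : ∀ e, 0 < w e)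
    (hinj : Function.Injective w) :
    Function.Injective fun A : Finset E => ∑ s ∈ A, w s ^ p := by
  intro A B hAB
  by_contra hne
  obtain ⟨e, he, hle⟩ := exists_max_image (A ∆ B) w (symmDiff_nonempty.2 hne)
  have hmax : ∀ s ∈ A ∆ B, s ≠ e → w s < w e := fun s hs hse =>
    (hle s hs).lt_of_ne (hinj.ne hse)
  rcases mem_symmDiff.1 he with ⟨heA, -⟩ | ⟨heB, -⟩
  · exact (hdom.sum_rpow_lt_sum_rpow hpos he hmax heA).ne' hAB
  · rw [symmDiff_comm] at he hmax
    exact (hdom.sum_rpow_lt_sum_rpow hpos he hmax heB).ne hAB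

end DominantPower

theorem sum_pow_symmDiff_max_and_injective_general {E : Type*} [Fintype E] [DecidableEq E]
    (w : E → ℝ) (hpos : ∀ e, 0 < w e) (hinj : Function.Injective w)
    (p : ℝ) (hdom : DominantPower w p) :
    (∀ A B : Finset E, A ≠ B → ∀ e ∈ (A \ B) ∪ (B \ A),
        (∀ s ∈ (A \ B) ∪ (B \ A), s ≠ e → w s < w e) → e ∈ A →
        (∑ s ∈ B, w s ^ p) < ∑ s ∈ A, w s ^ p) ∧
    Function.Injective (fun A : Finset E => ∑ s ∈ A, w s ^ p) :=
  ⟨fun _ _ _ _ he hmax heA => hdom.sum_rpow_lt_sum_rpow hpos he hmax heA,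
    hdom.injective_sum_rpow hpos hinj⟩

/-- Let `p > 0` be a dominant power for positive, pairwise distinct weights `w`.
For any two distinct subsets `A, B`, if the maximum-weight element `e` of the
symmetric difference of `A` and `B` belongs to `A`, then
`∑_{s ∈ A} w s ^ p > ∑_{s ∈ B} w s ^ p`.  In particular the map
`A ↦ ∑_{s ∈ A} w s ^ p` is injective on subsets of `E`. -/
theorem sum_pow_symmDiff_max_and_injective {E : Type*} [Fintype E] [DecidableEq E]
    (w : E → ℝ) (hpos : ∀ e, 0 < w e) (hinj : Function.Injective w)
    (p : ℝ) (hp : 0 < p) (hdom : DominantPower w p) :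
    (∀ A B : Finset E, A ≠ B → ∀ e ∈ (A \ B) ∪ (B \ A),
        (∀ s ∈ (A \ B) ∪ (B \ A), s ≠ e → w s < w e) → e ∈ A →
        (∑ s ∈ B, w s ^ p) < ∑ s ∈ A, w s ^ p) ∧
    Function.Injective (fun A : Finset E => ∑ s ∈ A, w s ^ p) :=
  sum_pow_symmDiff_max_and_injective_general w hpos hinj p hdom
end

section
/- Let E be a finite set with positive, pairwise distinct weights w : E → ℝ, let p > 0 be a dominant power, and let F be a downward-closed family of subsets of E (A ⊆ B and B ∈ F imply A ∈ F) with ∅ ∈ F. Let e₁ be the maximum-weight element of E such that {e₁} ∈ F. Then every A ∈ F maximizing ∑_{e ∈ A} w_e^p over F contains e₁ (greedy choice property). -/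
theorem DominantPower.sum_rpow_lt_s3 {E : Type*} [Fintype E] {w : E → ℝ} {p : ℝ}
    (hdom : DominantPower w p) (hpos : ∀ e, 0 < w e) {A : Finset E} {e : E}
    (hA : ∀ s ∈ A, w s < w e) :
    ∑ s ∈ A, w s ^ p < w e ^ p :=
  calc ∑ s ∈ A, w s ^ p
      ≤ ∑ s ∈ Finset.univ.filter (fun s => w s < w e), w s ^ p :=
        Finset.sum_le_sum_of_subset_of_nonneg (fun s hs => by simpa using hA s hs)
          (fun s _ _ => Real.rpow_nonneg (hpos s).le p)
    _ < w e ^ p := hdom e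

theorem greedy_choice_property_general {E : Type*} [Fintype E]
    (w : E → ℝ) (hpos : ∀ e, 0 < w e) (hinj : Function.Injective w)
    (p : ℝ) (hdom : DominantPower w p)
    (F : Set (Finset E))
    (hdown : ∀ A B : Finset E, A ⊆ B → B ∈ F → A ∈ F)
    (e₁ : E) (he₁ : ({e₁} : Finset E) ∈ F)
    (hmax : ∀ e : E, ({e} : Finset E) ∈ F → w e ≤ w e₁) :
    ∀ A ∈ F, (∀ B ∈ F, (∑ s ∈ B, w s ^ p) ≤ ∑ s ∈ A, w s ^ p) → e₁ ∈ A := by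
  intro A hA hopt
  by_contra he₁A
  have lighter : ∀ s ∈ A, w s < w e₁ := fun s hs =>
    (hmax s (hdown {s} A (Finset.singleton_subset_iff.mpr hs) hA)).lt_of_ne
      fun h => he₁A (hinj h ▸ hs)
  have hsingle : w e₁ ^ p ≤ ∑ s ∈ A, w s ^ p := by
    simpa using hopt {e₁} he₁
  exact (hdom.sum_rpow_lt_s3 hpos lighter).not_ge hsingle

/-- Greedy choice property: for a downward-closed family `F` containing `∅`, if
`e₁` is the maximum-weight element with `{e₁} ∈ F`, then every `A ∈ F`
maximizing `∑_{e ∈ A} w e ^ p` over `F` contains `e₁`. -/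
theorem greedy_choice_property {E : Type*} [Fintype E]
    (w : E → ℝ) (hpos : ∀ e, 0 < w e) (hinj : Function.Injective w)
    (p : ℝ) (hp : 0 < p) (hdom : DominantPower w p)
    (F : Set (Finset E))
    (hdown : ∀ A B : Finset E, A ⊆ B → B ∈ F → A ∈ F)
    (hempty : (∅ : Finset E) ∈ F)
    (e₁ : E) (he₁ : ({e₁} : Finset E) ∈ F)
    (hmax : ∀ e : E, ({e} : Finset E) ∈ F → w e ≤ w e₁) :
    ∀ A ∈ F, (∀ B ∈ F, (∑ s ∈ B, w s ^ p) ≤ ∑ s ∈ A, w s ^ p) → e₁ ∈ A :=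
  greedy_choice_property_general w hpos hinj p hdom F hdown e₁ he₁ hmax
end

section
/- Let V be a finite set of internal nodes and T a finite set of terminal nodes, with internal edges E ⊆ V × V and semantic edges connecting every internal node to every terminal. Let y assign a value in {0,1} to every internal and semantic edge and suppose: (i) ∑_{t ∈ T} y_{it} = |T| − 1 for every i ∈ V; (ii) y_{uv} ≥ y_{ut} − y_{vt} and y_{uv} ≥ y_{vt} − y_{ut} for every (u,v) ∈ E and every t ∈ T. Then for any two terminals t, t' ∈ T, if there exists a path t, v₁, …, v_k, t' with v₁, …, v_k ∈ V whose first and last edges are semantic and whose intermediate edges belong to E, and all of whose edges e satisfy y_e = 0, then t = t'. In other words, the Symmetric Multiway Cut consistency constraints imply the label constraint that no path of uncut edges connects two distinct terminal nodes. -/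
/-!
An uncut internal edge `(u, v)` forces `yS u t = yS v t` for every terminal `t`, so along an uncut
path the vector of semantic cuts is the same at every node. At a single node it is a `0/1`-vector
summing to `|T| - 1`, i.e. it leaves exactly one terminal uncut; both ends of the path are uncut
at that node, hence `t = t'`.
-/

theorem Fin.apply_eq_apply_zero_of_castSucc_eq_succ {β : Type*} {n : ℕ} {g : Fin (n + 1) → β}
    (h : ∀ i : Fin n, g i.castSucc = g i.succ) (i : Fin (n + 1)) : g i = g 0 := by
  induction i using Fin.induction with
  | zero => rfl
  | succ j ih => rw [← h j, ih]

theorem eq_of_apply_eq_zero_of_sum_eq_card_sub_one {T : Type*} [Fintype T] {x : T → ℤ}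
    (hx : ∀ t, x t = 0 ∨ x t = 1) (hsum : ∑ t, x t = (Fintype.card T : ℤ) - 1)
    {t t' : T} (ht : x t = 0) (ht' : x t' = 0) : t = t' := by
  classical
  by_contra hne
  have huncut : ∑ s, (1 - x s) = 1 := by
    rw [Finset.sum_sub_distrib, hsum]
    simp
  have hpair : ∑ s ∈ {t, t'}, (1 - x s) = 2 := by
    rw [Finset.sum_pair hne, ht, ht']
    norm_num
  have hle : ∑ s ∈ {t, t'}, (1 - x s) ≤ ∑ s, (1 - x s) :=
    Finset.sum_le_sum_of_subset_of_nonneg (Finset.subset_univ _) fun s _ _ => by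
      rcases hx s with h | h <;> simp [h]
  omega

theorem smwc_implies_label_constraint_general {V T : Type*} [Fintype T]
    (E : Set (V × V))
    (yE : V × V → ℤ) (yS : V → T → ℤ)
    (hyS : ∀ i t, yS i t = 0 ∨ yS i t = 1)
    (hsum : ∀ i : V, (∑ t, yS i t) = (Fintype.card T : ℤ) - 1)
    (hcyc1 : ∀ u v, (u, v) ∈ E → ∀ t : T, yS u t - yS v t ≤ yE (u, v))
    (hcyc2 : ∀ u v, (u, v) ∈ E → ∀ t : T, yS v t - yS u t ≤ yE (u, v)) :
    ∀ (t t' : T) (n : ℕ) (v : Fin (n + 1) → V),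
      yS (v 0) t = 0 → yS (v (Fin.last n)) t' = 0 →
      (∀ i : Fin n,
        (v i.castSucc, v i.succ) ∈ E ∧ yE (v i.castSucc, v i.succ) = 0) →
      t = t' := by
  intro t t' n v h0 hlast hpath
  have hstep (i : Fin n) : yS (v i.castSucc) = yS (v i.succ) := by
    obtain ⟨hE, huncut⟩ := hpath i
    funext s
    exact le_antisymm (sub_nonpos.mp (huncut ▸ hcyc1 _ _ hE s))
      (sub_nonpos.mp (huncut ▸ hcyc2 _ _ hE s))
  have hconst : yS (v (Fin.last n)) = yS (v 0) :=
    Fin.apply_eq_apply_zero_of_castSucc_eq_succ (g := fun i => yS (v i)) hstep _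
  refine eq_of_apply_eq_zero_of_sum_eq_card_sub_one (hyS (v 0)) (hsum (v 0)) h0 ?_
  rwa [← hconst]

/-- The Symmetric Multiway Cut consistency constraints imply the label
constraint.  Let `yE` be binary cut indicators on the internal edges `E` and
`yS i t` binary cut indicators on the semantic edges, satisfying
(i) `∑_{t ∈ T} yS i t = |T| - 1` for every internal node `i`, and
(ii) `yE (u,v) ≥ yS u t - yS v t` and `yE (u,v) ≥ yS v t - yS u t` for every
`(u,v) ∈ E` and every terminal `t`.  Then any path `t, v₀, …, v_n, t'` whose
first and last edges are semantic and uncut and whose intermediate edges belong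
to `E` and are uncut forces `t = t'`: no path of uncut edges connects two
distinct terminal nodes. -/
theorem smwc_implies_label_constraint {V T : Type*} [Fintype V] [Fintype T]
    (E : Set (V × V))
    (yE : V × V → ℤ) (yS : V → T → ℤ)
    (hyE : ∀ e, yE e = 0 ∨ yE e = 1)
    (hyS : ∀ i t, yS i t = 0 ∨ yS i t = 1)
    (hsum : ∀ i : V, (∑ t, yS i t) = (Fintype.card T : ℤ) - 1)
    (hcyc1 : ∀ u v, (u, v) ∈ E → ∀ t : T, yS u t - yS v t ≤ yE (u, v))
    (hcyc2 : ∀ u v, (u, v) ∈ E → ∀ t : T, yS v t - yS u t ≤ yE (u, v)) :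
    ∀ (t t' : T) (n : ℕ) (v : Fin (n + 1) → V),
      yS (v 0) t = 0 → yS (v (Fin.last n)) t' = 0 →
      (∀ i : Fin n,
        (v i.castSucc, v i.succ) ∈ E ∧ yE (v i.castSucc, v i.succ) = 0) →
      t = t' :=
  smwc_implies_label_constraint_general E yE yS hyS hsum hcyc1 hcyc2
end

section
/- Let E be a finite set with positive, pairwise distinct weights w : E → ℝ, let p > 0 be a dominant power, and let F be a downward-closed family of subsets of E with ∅ ∈ F. Then the set A ∈ F maximizing ∑_{e ∈ A} w_e^p is unique. -/
namespace DominantPower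

variable {E : Type*} [Fintype E] {w : E → ℝ} {p : ℝ}

theorem sum_lt (hdom : DominantPower w p) (hpos : ∀ e, 0 < w e) (hinj : Function.Injective w)
    {S : Finset E} {e : E} (he : e ∉ S) (hS : ∀ s ∈ S, w s ≤ w e) :
    ∑ s ∈ S, w s ^ p < w e ^ p := by
  have hS_lighter : S ⊆ Finset.univ.filter (fun s => w s < w e) := fun s hs =>
    Finset.mem_filter.2 ⟨Finset.mem_univ s,
      (hS s hs).lt_of_ne fun h => he (hinj h ▸ hs)⟩
  calc ∑ s ∈ S, w s ^ p
      ≤ ∑ s ∈ Finset.univ.filter (fun s => w s < w e), w s ^ p :=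
        Finset.sum_le_sum_of_subset_of_nonneg hS_lighter fun s _ _ =>
          (Real.rpow_pos_of_pos (hpos s) p).le
    _ < w e ^ p := hdom e

theorem sum_lt_sum_insert_inter [DecidableEq E] (hdom : DominantPower w p)
    (hpos : ∀ e, 0 < w e) (hinj : Function.Injective w) {A B : Finset E} {e : E}
    (heB : e ∉ B) (hmax : ∀ s ∈ B \ A, w s ≤ w e) :
    ∑ s ∈ B, w s ^ p < ∑ s ∈ insert e (A ∩ B), w s ^ p := by
  have he_sdiff : e ∉ B \ A := fun h => heB (Finset.mem_sdiff.1 h).1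
  rw [Finset.sum_insert fun h => heB (Finset.mem_inter.1 h).2, Finset.inter_comm,
    ← Finset.sum_inter_add_sum_sdiff B A]
  linarith [hdom.sum_lt hpos hinj he_sdiff hmax]

theorem eq_of_forall_sum_le (hdom : DominantPower w p) (hpos : ∀ e, 0 < w e)
    (hinj : Function.Injective w) {F : Set (Finset E)}
    (hdown : ∀ A B : Finset E, A ⊆ B → B ∈ F → A ∈ F) {A B : Finset E}
    (hAF : A ∈ F) (hBF : B ∈ F)
    (hAmax : ∀ C ∈ F, ∑ s ∈ C, w s ^ p ≤ ∑ s ∈ A, w s ^ p)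
    (hBmax : ∀ C ∈ F, ∑ s ∈ C, w s ^ p ≤ ∑ s ∈ B, w s ^ p) : A = B := by
  classical
  have beaten {X Y : Finset E} (hXF : X ∈ F)
      (hYmax : ∀ C ∈ F, ∑ s ∈ C, w s ^ p ≤ ∑ s ∈ Y, w s ^ p)
      {e : E} (heX : e ∈ X) (heY : e ∉ Y) (hmax : ∀ s ∈ symmDiff X Y, w s ≤ w e) : False := by
    have hC : insert e (X ∩ Y) ∈ F :=
      hdown _ X (Finset.insert_subset heX Finset.inter_subset_left) hXF
    have hlt := hdom.sum_lt_sum_insert_inter hpos hinj heY fun s hs =>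
      hmax s (Finset.mem_symmDiff.2 (Or.inr (Finset.mem_sdiff.1 hs)))
    exact (hYmax _ hC).not_gt hlt
  by_contra hne
  have hsymm : (symmDiff A B).Nonempty :=
    Finset.nonempty_iff_ne_empty.2 fun h => hne (symmDiff_eq_bot.1 h)
  obtain ⟨e, he, hmax⟩ := (symmDiff A B).exists_max_image w hsymm
  rcases Finset.mem_symmDiff.1 he with ⟨heA, heB⟩ | ⟨heB, heA⟩
  · exact beaten hAF hBmax heA heB hmax
  · exact beaten hBF hAmax heB heA fun s hs => hmax s (symmDiff_comm A B ▸ hs)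

end DominantPower

theorem maximizer_unique_general {E : Type*} [Fintype E]
    (w : E → ℝ) (hpos : ∀ e, 0 < w e) (hinj : Function.Injective w)
    (p : ℝ) (hdom : DominantPower w p)
    (F : Set (Finset E))
    (hdown : ∀ A B : Finset E, A ⊆ B → B ∈ F → A ∈ F)
    (hempty : (∅ : Finset E) ∈ F) :
    ∃! A : Finset E, A ∈ F ∧ ∀ B ∈ F, (∑ s ∈ B, w s ^ p) ≤ ∑ s ∈ A, w s ^ p := by
  obtain ⟨A, hAF, hAmax⟩ := F.exists_max_image (fun B => ∑ s ∈ B, w s ^ p) F.toFinite ⟨∅, hempty⟩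
  exact ⟨A, ⟨hAF, hAmax⟩, fun B ⟨hBF, hBmax⟩ =>
    hdom.eq_of_forall_sum_le hpos hinj hdown hBF hAF hBmax hAmax⟩

/-- For positive, pairwise distinct weights, a dominant power `p > 0`, and a
downward-closed family `F` of subsets of `E` with `∅ ∈ F`, the set `A ∈ F`
maximizing `∑_{e ∈ A} w e ^ p` over `F` is unique. -/
theorem maximizer_unique {E : Type*} [Fintype E]
    (w : E → ℝ) (hpos : ∀ e, 0 < w e) (hinj : Function.Injective w)
    (p : ℝ) (hp : 0 < p) (hdom : DominantPower w p)
    (F : Set (Finset E))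
    (hdown : ∀ A B : Finset E, A ⊆ B → B ∈ F → A ∈ F)
    (hempty : (∅ : Finset E) ∈ F) :
    ∃! A : Finset E, A ∈ F ∧ ∀ B ∈ F, (∑ s ∈ B, w s ^ p) ≤ ∑ s ∈ A, w s ^ p :=
  maximizer_unique_general w hpos hinj p hdom F hdown hempty
end
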